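/- Let μ_b, μ_s ≥ 0, κ_b, β_b > 0, T > 0, M_s ≥ 0, M_{b,0} ≥ 0 and δ₀ ∈ (0,1]. For i = 1,2 let c_i : [0,T] → ℝ be continuous with 0 ≤ c_i(t) ≤ M_s, and let φ_i, y_i : [0,T] → ℝ be differentiable and satisfy φ_i'(t) = −μ_b φ_i(t) y_i(t) − μ_s φ_i(t) c_i(t) and y_i'(t) = κ_b·(φ_i(t)/(1+φ_i(t)))·(1−φ_i(t)) − (μ_b φ_i(t) + β_b)·y_i(t) for all t ∈ [0,T], with common initial data φ₁(0) = φ₂(0) ∈ [δ₀,1] and y₁(0) = y₂(0) ∈ [0, M_{b,0}]. Then there exists a constant C ≥ 0, depending only on μ_b, μ_s, κ_b, β_b, T, M_s and M_{b,0}, such that |φ₁(t) − φ₂(t)| + |y₁(t) − y₂(t)| ≤ C ∫₀ᵗ |c₁(τ) − c₂(τ)| dτ for all t ∈ [0,T]. -/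

import Mathlib

/-!
Both solutions stay in the box `0 ≤ φ ≤ 1`, `0 ≤ y ≤ M := max M_{b,0} (κ_b / β_b)`: `φ` solves
the linear equation `φ' = k φ`, so `φ = φ(0) · exp ∫ k ≥ 0`; `φ ≤ 1` and `y ≥ 0` hold together
because the squared excess `V = (φ - 1)₊² + (-y)₊²` satisfies `V' ≤ K V` and `V(0) = 0`; and
`y ≤ M` because `y' < 0` wherever `y > M`. On this box the right-hand side is Lipschitz in
`(φ, y)`, and in `c` with constant `μ_s`, so the difference `Δ` of two solutions satisfies
`‖Δ'‖ ≤ K ‖Δ‖ + μ_s |c₁ - c₂|` with `Δ(0) = 0`. Gronwall's inequality with this time-dependent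
forcing gives `‖Δ(t)‖ ≤ e^{K t} μ_s ∫₀ᵗ |c₁ - c₂|`.
-/

open Set Real intervalIntegral Filter Topology

theorem hasDerivWithinAt_integral_Icc {g : ℝ → ℝ} {a b x : ℝ} (hg : ContinuousOn g (Icc a b))
    (hx : x ∈ Icc a b) :
    HasDerivWithinAt (fun u => ∫ s in a..u, g s) (g x) (Icc a b) x :=
  have : Fact (x ∈ Icc a b) := ⟨hx⟩
  integral_hasDerivWithinAt_right
    ((hg.mono (Icc_subset_Icc_right hx.2)).intervalIntegrable_of_Icc hx.1)
    (hg.stronglyMeasurableAtFilter_nhdsWithin measurableSet_Icc x) (hg x hx)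

theorem HasDerivWithinAt.Ici_of_Icc {E : Type*} [NormedAddCommGroup E] [NormedSpace ℝ E]
    {f : ℝ → E} {f' : E} {a b x : ℝ} (h : HasDerivWithinAt f f' (Icc a b) x) (hx : x ∈ Ico a b) :
    HasDerivWithinAt f f' (Ici x) x :=
  h.mono_of_mem_nhdsWithin (Icc_mem_nhdsGE_of_mem hx)

theorem nonpos_of_hasDerivWithinAt_le_mul {f f' : ℝ → ℝ} {K a b : ℝ}
    (hf : ∀ x ∈ Icc a b, HasDerivWithinAt f (f' x) (Icc a b) x) (ha : f a ≤ 0)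
    (bound : ∀ x ∈ Ico a b, f' x ≤ K * f x) : ∀ x ∈ Icc a b, f x ≤ 0 := by
  intro x hx
  simpa [gronwallBound_ε0_δ0] using le_gronwallBound_of_liminf_deriv_right_le (ε := 0)
    (fun x hx => (hf x hx).continuousWithinAt)
    (fun x hx _ hr => ((hf x ⟨hx.1, hx.2.le⟩).Ici_of_Icc hx).liminf_right_slope_le hr) ha
    (fun x hx => (bound x hx).trans_eq (add_zero _).symm) x hx

theorem eq_mul_exp_integral_of_hasDerivWithinAt {f k : ℝ → ℝ} {a b : ℝ}
    (hk : ContinuousOn k (Icc a b))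
    (hf : ∀ x ∈ Icc a b, HasDerivWithinAt f (k x * f x) (Icc a b) x) :
    ∀ x ∈ Icc a b, f x = f a * exp (∫ s in a..x, k s) := by
  set h : ℝ → ℝ := fun x => f x * exp (-∫ s in a..x, k s)
  have hh : ∀ x ∈ Icc a b, HasDerivWithinAt h 0 (Icc a b) x := fun x hx => by
    have hexp : HasDerivWithinAt (fun x => exp (-∫ s in a..x, k s))
        (exp (-∫ s in a..x, k s) * -k x) (Icc a b) x :=
      (hasDerivWithinAt_integral_Icc hk hx).fun_neg.exp
    exact ((hf x hx).mul hexp).congr_deriv (by ring)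
  have hconst := constant_of_has_deriv_right_zero (fun x hx => (hh x hx).continuousWithinAt)
    (fun x hx => (hh x ⟨hx.1, hx.2.le⟩).Ici_of_Icc hx)
  intro x hx
  have := hconst x hx
  simp only [h, integral_same, neg_zero, exp_zero, mul_one] at this
  rw [← this, mul_assoc, ← exp_add, neg_add_cancel, exp_zero, mul_one]

theorem hasDerivAt_max_zero_sq (x : ℝ) : HasDerivAt (fun y : ℝ => max y 0 ^ 2) (2 * max x 0) x := by
  rcases lt_trichotomy x 0 with hx | rfl | hx
  · rw [max_eq_right hx.le, mul_zero]
    refine (hasDerivAt_const x 0).congr_of_eventuallyEq ?_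
    filter_upwards [Iio_mem_nhds hx] with y (hy : y < 0)
    simp [hy.le]
  · rw [hasDerivAt_iff_tendsto_slope, max_self, mul_zero]
    have hcont : Tendsto (fun y : ℝ => max y 0) (𝓝[≠] 0) (𝓝 0) := by
      simpa using ((continuous_id.max (continuous_const (y := (0:ℝ)))).tendsto (0:ℝ)).mono_left
        (nhdsWithin_le_nhds (s := {0}ᶜ))
    refine hcont.congr' ?_
    filter_upwards [self_mem_nhdsWithin] with y hy
    rw [slope_def_field]
    rcases le_total y 0 with h | h <;> field_simp [hy] <;> simp [h, sq]
  · rw [max_eq_left hx.le]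
    refine ((hasDerivAt_pow 2 x).congr_of_eventuallyEq ?_).congr_deriv (by ring)
    filter_upwards [Ioi_mem_nhds hx] with y (hy : 0 < y)
    rw [max_eq_left hy.le]

theorem HasDerivWithinAt.max_zero_sq {f : ℝ → ℝ} {f' x : ℝ} {s : Set ℝ}
    (hf : HasDerivWithinAt f f' s x) :
    HasDerivWithinAt (fun t => max (f t) 0 ^ 2) (2 * max (f x) 0 * f') s x :=
  (hasDerivAt_max_zero_sq (f x)).comp_hasDerivWithinAt x hf

theorem nonpos_of_max_zero_sq_nonpos {x : ℝ} (h : max x 0 ^ 2 ≤ 0) : x ≤ 0 := by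
  have : max x 0 = 0 := pow_eq_zero_iff two_ne_zero |>.mp (le_antisymm h (sq_nonneg _))
  exact this ▸ le_max_left x 0

theorem le_of_hasDerivWithinAt_nonpos_of_lt {f f' : ℝ → ℝ} {a b M : ℝ}
    (hf : ∀ x ∈ Icc a b, HasDerivWithinAt f (f' x) (Icc a b) x) (ha : f a ≤ M)
    (h : ∀ x ∈ Ico a b, M < f x → f' x ≤ 0) : ∀ x ∈ Icc a b, f x ≤ M := by
  have hV := nonpos_of_hasDerivWithinAt_le_mul (K := 0)
    (fun x hx => ((hf x hx).sub_const M).max_zero_sq) (by simp [ha]) fun x hx => by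
      rcases le_or_gt (f x) M with hle | hlt
      · simp [hle]
      · simpa using mul_nonpos_of_nonneg_of_nonpos (by positivity) (h x hx hlt)
  exact fun x hx => sub_nonpos.mp (nonpos_of_max_zero_sq_nonpos (hV x hx))

theorem norm_le_exp_mul_add_integral_of_norm_deriv_le {E : Type*} [NormedAddCommGroup E]
    [NormedSpace ℝ E]
    {f f' : ℝ → E} {g : ℝ → ℝ} {K a b : ℝ} (hK : 0 ≤ K)
    (hf : ∀ x ∈ Icc a b, HasDerivWithinAt f (f' x) (Icc a b) x)
    (hg : ContinuousOn g (Icc a b)) (hg0 : ∀ x ∈ Icc a b, 0 ≤ g x)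
    (bound : ∀ x ∈ Ico a b, ‖f' x‖ ≤ K * ‖f x‖ + g x) :
    ∀ t ∈ Icc a b, ‖f t‖ ≤ exp (K * (t - a)) * (‖f a‖ + ∫ s in a..t, g s) := by
  intro t ht
  set P : ℝ → ℝ := fun u => ∫ s in a..u, g s
  have key : ∀ ε > 0, ‖f t‖ ≤ exp (K * (t - a)) * (‖f a‖ + P t + ε * (t - a + 1)) := by
    intro ε hε
    -- `B' = K B + e^{K (u - a)} (g + ε)` exceeds `K B + g`, which bounds `‖f'‖` where `‖f‖ = B`.
    set B : ℝ → ℝ := fun u => exp (K * (u - a)) * (‖f a‖ + P u + ε * (u - a + 1))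
    have hB : ∀ x ∈ Icc a b, HasDerivWithinAt B
        (K * B x + exp (K * (x - a)) * (g x + ε)) (Icc a b) x := fun x hx => by
      have he : HasDerivAt (fun u => exp (K * (u - a))) (exp (K * (x - a)) * K) x := by
        simpa using (((hasDerivAt_id x).sub_const a).const_mul K).exp
      have hl : HasDerivAt (fun u => ε * (u - a + 1)) ε x := by
        simpa using (((hasDerivAt_id x).sub_const a).add_const 1).const_mul ε
      have hP := (hasDerivWithinAt_integral_Icc hg hx).const_add ‖f a‖
      exact (he.hasDerivWithinAt.fun_mul (hP.fun_add hl.hasDerivWithinAt)).congr_deriv (by ring)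
    refine image_norm_le_of_norm_deriv_right_lt_deriv_boundary'
      (fun x hx => (hf x hx).continuousWithinAt)
      (fun x hx => (hf x ⟨hx.1, hx.2.le⟩).Ici_of_Icc hx)
      (by simp [B, P, hε.le]) (fun x hx => (hB x hx).continuousWithinAt)
      (fun x hx => ((hB x ⟨hx.1, hx.2.le⟩).Ici_of_Icc hx)) (fun x hx hfB => ?_) ht
    have h1 : 1 ≤ exp (K * (x - a)) := one_le_exp (mul_nonneg hK (sub_nonneg.2 hx.1))
    have h2 : 0 ≤ g x := hg0 x ⟨hx.1, hx.2.le⟩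
    calc ‖f' x‖ ≤ K * B x + g x := hfB ▸ bound x hx
      _ < K * B x + exp (K * (x - a)) * (g x + ε) := by nlinarith
  refine le_of_forall_pos_le_add fun δ hδ => ?_
  have ht1 : 0 < t - a + 1 := by linarith [ht.1]
  have hD : 0 < exp (K * (t - a)) * (t - a + 1) := by positivity
  calc ‖f t‖
      ≤ exp (K * (t - a)) * (‖f a‖ + P t + δ / (exp (K * (t - a)) * (t - a + 1)) * (t - a + 1)) :=
        key _ (div_pos hδ hD)
    _ = exp (K * (t - a)) * (‖f a‖ + P t) + δ := by field_simp

theorem abs_mul_add_mul_le {p q u v P Q : ℝ} (hp : |p| ≤ P) (hq : |q| ≤ Q) :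
    |p * u + q * v| ≤ P * |u| + Q * |v| :=
  calc |p * u + q * v| ≤ |p| * |u| + |q| * |v| := by
        simpa only [abs_mul] using abs_add_le (p * u) (q * v)
    _ ≤ P * |u| + Q * |v| := by gcongr

theorem abs_add_abs_le_two_mul_norm (a b : ℝ) : |a| + |b| ≤ 2 * ‖(a, b)‖ := by
  rw [Prod.norm_mk, Real.norm_eq_abs, Real.norm_eq_abs]
  linarith [le_max_left |a| |b|, le_max_right |a| |b|]

/-- `hill` is the production term `f_b`; `ecmRate` and `mmpRate` are the right-hand sides of the
equations for the ECM fraction `φ` and the bound-MMP density `y = c_b (1 - φ)`. -/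
noncomputable def hill (φ : ℝ) : ℝ := φ / (1 + φ)

def ecmRate (μb μs φ y c : ℝ) : ℝ := -(μb * φ * y) - μs * φ * c

noncomputable def mmpRate (μb κb βb φ y : ℝ) : ℝ := κb * hill φ * (1 - φ) - (μb * φ + βb) * y

structure IsSubsystemSolution (μb μs κb βb T : ℝ) (c φ y : ℝ → ℝ) : Prop where
  hasDerivWithinAt_ecm :
    ∀ t ∈ Icc 0 T, HasDerivWithinAt φ (ecmRate μb μs (φ t) (y t) (c t)) (Icc 0 T) t
  hasDerivWithinAt_mmp :
    ∀ t ∈ Icc 0 T, HasDerivWithinAt y (mmpRate μb κb βb (φ t) (y t)) (Icc 0 T) t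

section Rates

variable {μb μs κb βb : ℝ}

theorem hill_nonneg {φ : ℝ} (hφ : 0 ≤ φ) : 0 ≤ hill φ :=
  div_nonneg hφ (by linarith)

theorem hill_le_one {φ : ℝ} (hφ : 0 ≤ φ) : hill φ ≤ 1 :=
  div_le_one_of_le₀ (by linarith) (by linarith)

theorem abs_hill_mul_sub_le {a b : ℝ} (ha : a ∈ Icc (0 : ℝ) 1) (hb : b ∈ Icc (0 : ℝ) 1) :
    |hill a * (1 - a) - hill b * (1 - b)| ≤ 2 * |a - b| := by
  obtain ⟨ha0, ha1⟩ := ha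
  obtain ⟨hb0, hb1⟩ := hb
  have hden : 1 ≤ (1 + a) * (1 + b) := by nlinarith
  have hnum : |1 - a - b - a * b| ≤ 2 := abs_le.mpr ⟨by nlinarith, by nlinarith⟩
  have key : hill a * (1 - a) - hill b * (1 - b)
      = (a - b) * (1 - a - b - a * b) / ((1 + a) * (1 + b)) := by
    unfold hill; field_simp; ring
  rw [key, abs_div, abs_mul, abs_of_pos (by linarith : (0 : ℝ) < (1 + a) * (1 + b))]
  calc |a - b| * |1 - a - b - a * b| / ((1 + a) * (1 + b))
      ≤ |a - b| * |1 - a - b - a * b| := div_le_self (by positivity) hden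
    _ ≤ 2 * |a - b| := by nlinarith [abs_nonneg (a - b)]

theorem abs_ecmRate_sub_le {φ₁ φ₂ y₁ y₂ c₁ c₂ M Mc : ℝ} (hμb : 0 ≤ μb) (hμs : 0 ≤ μs)
    (hφ₁ : |φ₁| ≤ 1) (hy₂ : |y₂| ≤ M) (hc₂ : |c₂| ≤ Mc) :
    |ecmRate μb μs φ₁ y₁ c₁ - ecmRate μb μs φ₂ y₂ c₂|
      ≤ (μb * M + μs * Mc) * |φ₁ - φ₂| + μb * |y₁ - y₂| + μs * |c₁ - c₂| := by
  have key : ecmRate μb μs φ₁ y₁ c₁ - ecmRate μb μs φ₂ y₂ c₂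
      = -(μb * (φ₁ * (y₁ - y₂) + y₂ * (φ₁ - φ₂)) + μs * (φ₁ * (c₁ - c₂) + c₂ * (φ₁ - φ₂))) := by
    unfold ecmRate; ring
  have hy := abs_mul_add_mul_le (u := y₁ - y₂) (v := φ₁ - φ₂) hφ₁ hy₂
  have hc := abs_mul_add_mul_le (u := c₁ - c₂) (v := φ₁ - φ₂) hφ₁ hc₂
  calc |ecmRate μb μs φ₁ y₁ c₁ - ecmRate μb μs φ₂ y₂ c₂|
      ≤ μb * |φ₁ * (y₁ - y₂) + y₂ * (φ₁ - φ₂)| + μs * |φ₁ * (c₁ - c₂) + c₂ * (φ₁ - φ₂)| := by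
        rw [key, abs_neg]
        exact abs_mul_add_mul_le (abs_of_nonneg hμb).le (abs_of_nonneg hμs).le
    _ ≤ μb * (1 * |y₁ - y₂| + M * |φ₁ - φ₂|) + μs * (1 * |c₁ - c₂| + Mc * |φ₁ - φ₂|) := by
        gcongr
    _ = (μb * M + μs * Mc) * |φ₁ - φ₂| + μb * |y₁ - y₂| + μs * |c₁ - c₂| := by ring

theorem abs_mmpRate_sub_le {φ₁ φ₂ y₁ y₂ M : ℝ} (hμb : 0 ≤ μb) (hκb : 0 ≤ κb) (hβb : 0 ≤ βb)
    (hφ₁ : φ₁ ∈ Icc (0 : ℝ) 1) (hφ₂ : φ₂ ∈ Icc (0 : ℝ) 1) (hy₂ : |y₂| ≤ M) :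
    |mmpRate μb κb βb φ₁ y₁ - mmpRate μb κb βb φ₂ y₂|
      ≤ (2 * κb + μb * M) * |φ₁ - φ₂| + (μb + βb) * |y₁ - y₂| := by
  have key : mmpRate μb κb βb φ₁ y₁ - mmpRate μb κb βb φ₂ y₂
      = κb * (hill φ₁ * (1 - φ₁) - hill φ₂ * (1 - φ₂))
        + -(μb * (φ₁ * (y₁ - y₂) + y₂ * (φ₁ - φ₂))) + -(βb * (y₁ - y₂)) := by
    unfold mmpRate; ring
  have hφ₁' : |φ₁| ≤ 1 := abs_le.mpr ⟨by linarith [hφ₁.1], hφ₁.2⟩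
  have hy := abs_mul_add_mul_le (u := y₁ - y₂) (v := φ₁ - φ₂) hφ₁' hy₂
  calc |mmpRate μb κb βb φ₁ y₁ - mmpRate μb κb βb φ₂ y₂|
      ≤ κb * |hill φ₁ * (1 - φ₁) - hill φ₂ * (1 - φ₂)|
        + μb * |φ₁ * (y₁ - y₂) + y₂ * (φ₁ - φ₂)| + βb * |y₁ - y₂| := by
        rw [key]
        refine (abs_add_three _ _ _).trans_eq ?_
        simp only [abs_neg, abs_mul, abs_of_nonneg hμb, abs_of_nonneg hκb, abs_of_nonneg hβb]
    _ ≤ κb * (2 * |φ₁ - φ₂|) + μb * (1 * |y₁ - y₂| + M * |φ₁ - φ₂|) + βb * |y₁ - y₂| := by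
        gcongr
        exact abs_hill_mul_sub_le hφ₁ hφ₂
    _ = (2 * κb + μb * M) * |φ₁ - φ₂| + (μb + βb) * |y₁ - y₂| := by ring

theorem norm_rates_sub_le {φ₁ φ₂ y₁ y₂ c₁ c₂ M Mc : ℝ} (hμb : 0 ≤ μb) (hμs : 0 ≤ μs)
    (hκb : 0 ≤ κb) (hβb : 0 ≤ βb) (hφ₁ : φ₁ ∈ Icc (0 : ℝ) 1) (hφ₂ : φ₂ ∈ Icc (0 : ℝ) 1)
    (hy₂ : |y₂| ≤ M) (hc₂ : |c₂| ≤ Mc) :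
    ‖(ecmRate μb μs φ₁ y₁ c₁ - ecmRate μb μs φ₂ y₂ c₂,
        mmpRate μb κb βb φ₁ y₁ - mmpRate μb κb βb φ₂ y₂)‖
      ≤ (μb * (1 + M) + μs * Mc + 2 * κb + βb) * ‖(φ₁ - φ₂, y₁ - y₂)‖ + μs * |c₁ - c₂| := by
  have hM : 0 ≤ M := (abs_nonneg _).trans hy₂
  have hMc : 0 ≤ Mc := (abs_nonneg _).trans hc₂
  have hφ₁' : |φ₁| ≤ 1 := abs_le.mpr ⟨by linarith [hφ₁.1], hφ₁.2⟩
  simp only [Prod.norm_mk, Real.norm_eq_abs]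
  set N := max |φ₁ - φ₂| |y₁ - y₂|
  have hφN : |φ₁ - φ₂| ≤ N := le_max_left _ _
  have hyN : |y₁ - y₂| ≤ N := le_max_right _ _
  have hN : 0 ≤ N := (abs_nonneg _).trans hφN
  have hc : 0 ≤ μs * |c₁ - c₂| := by positivity
  refine max_le ((abs_ecmRate_sub_le (y₁ := y₁) (c₁ := c₁) hμb hμs hφ₁' hy₂ hc₂).trans ?_)
    ((abs_mmpRate_sub_le (y₁ := y₁) hμb hκb hβb hφ₁ hφ₂ hy₂).trans ?_)
  · calc (μb * M + μs * Mc) * |φ₁ - φ₂| + μb * |y₁ - y₂| + μs * |c₁ - c₂|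
        ≤ (μb * M + μs * Mc) * N + μb * N + μs * |c₁ - c₂| := by gcongr
      _ ≤ _ := by nlinarith
  · calc (2 * κb + μb * M) * |φ₁ - φ₂| + (μb + βb) * |y₁ - y₂|
        ≤ (2 * κb + μb * M) * N + (μb + βb) * N := by gcongr
      _ ≤ _ := by nlinarith [mul_nonneg (mul_nonneg hμs hMc) hN]

theorem neg_hill_mul_le_max {φ : ℝ} (hφ : 0 ≤ φ) : -(hill φ * (1 - φ)) ≤ max (φ - 1) 0 := by
  have h0 := hill_nonneg hφ
  have h1 := hill_le_one hφ
  rcases le_total φ 1 with h | h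
  · exact (neg_nonpos.mpr (mul_nonneg h0 (by linarith))).trans (le_max_right _ _)
  · exact le_max_of_le_left (by nlinarith)

/-- The left side is the derivative of the squared excess `(φ - 1)₊² + (-y)₊²` along the flow. -/
theorem excess_rate_le {φ y c R : ℝ} (hμb : 0 ≤ μb) (hμs : 0 ≤ μs) (hκb : 0 ≤ κb)
    (hβb : 0 ≤ βb) (hφ : 0 ≤ φ) (hφR : φ ≤ R) (hc : 0 ≤ c) :
    2 * max (φ - 1) 0 * ecmRate μb μs φ y c + 2 * max (-y) 0 * -mmpRate μb κb βb φ y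
      ≤ (μb * R + κb) * (max (φ - 1) 0 ^ 2 + max (-y) 0 ^ 2) := by
  set p := max (φ - 1) 0
  set q := max (-y) 0
  have hp : 0 ≤ p := le_max_right _ _
  have hq : 0 ≤ q := le_max_right _ _
  have hyq : -y ≤ q := le_max_left _ _
  have hqy : q * y ≤ 0 := by
    rcases le_total y 0 with h | h
    · exact mul_nonpos_of_nonneg_of_nonpos hq h
    · simp [q, h]
  have hecm : ecmRate μb μs φ y c ≤ μb * R * q := by
    unfold ecmRate
    nlinarith [mul_le_mul_of_nonneg_left hyq (mul_nonneg hμb hφ),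
      mul_le_mul_of_nonneg_left hφR (mul_nonneg hμb hq), mul_nonneg (mul_nonneg hμs hφ) hc]
  have hmmp : q * -mmpRate μb κb βb φ y ≤ κb * (p * q) := by
    have := neg_hill_mul_le_max hφ
    unfold mmpRate
    nlinarith [mul_le_mul_of_nonneg_left this (mul_nonneg hκb hq),
      mul_nonpos_of_nonneg_of_nonpos (by positivity : 0 ≤ μb * φ + βb) hqy]
  calc 2 * p * ecmRate μb μs φ y c + 2 * q * -mmpRate μb κb βb φ y
      ≤ 2 * p * (μb * R * q) + 2 * (κb * (p * q)) := by
        rw [mul_assoc 2 q]; gcongr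
    _ = (μb * R + κb) * (2 * (p * q)) := by ring
    _ ≤ (μb * R + κb) * (p ^ 2 + q ^ 2) := by
        have : 0 ≤ μb * R + κb := by have := hφ.trans hφR; positivity
        gcongr
        nlinarith [sq_nonneg (p - q)]

end Rates

namespace IsSubsystemSolution

variable {μb μs κb βb T : ℝ} {c φ y : ℝ → ℝ}

theorem continuousOn_ecm (hs : IsSubsystemSolution μb μs κb βb T c φ y) :
    ContinuousOn φ (Icc 0 T) :=
  fun t ht => (hs.hasDerivWithinAt_ecm t ht).continuousWithinAt

theorem ecm_nonneg (hs : IsSubsystemSolution μb μs κb βb T c φ y)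
    (hc : ContinuousOn c (Icc 0 T)) (hφ0 : 0 ≤ φ 0) : ∀ t ∈ Icc 0 T, 0 ≤ φ t := by
  have hy : ContinuousOn y (Icc 0 T) :=
    fun t ht => (hs.hasDerivWithinAt_mmp t ht).continuousWithinAt
  have hφ := eq_mul_exp_integral_of_hasDerivWithinAt (k := fun t => -(μb * y t + μs * c t))
    ((hy.const_smul μb).add (hc.const_smul μs)).neg
    fun t ht => (hs.hasDerivWithinAt_ecm t ht).congr_deriv (by unfold ecmRate; ring)
  intro t ht
  rw [hφ t ht]
  positivity

theorem ecm_le_one_and_mmp_nonneg (hs : IsSubsystemSolution μb μs κb βb T c φ y)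
    (hμb : 0 ≤ μb) (hμs : 0 ≤ μs) (hκb : 0 ≤ κb) (hβb : 0 ≤ βb)
    (hc : ∀ t ∈ Icc 0 T, 0 ≤ c t) (hφ : ∀ t ∈ Icc 0 T, 0 ≤ φ t) (hφ0 : φ 0 ≤ 1) (hy0 : 0 ≤ y 0) :
    ∀ t ∈ Icc 0 T, φ t ≤ 1 ∧ 0 ≤ y t := by
  obtain ⟨R, hR⟩ := isCompact_Icc.exists_bound_of_continuousOn hs.continuousOn_ecm
  have hV := nonpos_of_hasDerivWithinAt_le_mul (K := μb * R + κb)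
    (fun t ht => ((hs.hasDerivWithinAt_ecm t ht).sub_const 1).max_zero_sq.fun_add
      (hs.hasDerivWithinAt_mmp t ht).fun_neg.max_zero_sq)
    (by simp [hφ0, hy0]) fun t ht => by
      have ht' : t ∈ Icc 0 T := Ico_subset_Icc_self ht
      simpa [mul_assoc] using excess_rate_le (y := y t) hμb hμs hκb hβb (hφ t ht')
        ((le_abs_self _).trans (hR t ht')) (hc t ht')
  intro t ht
  have h := hV t ht
  have h1 := sq_nonneg (max (φ t - 1) 0)
  have h2 := sq_nonneg (max (-y t) 0)
  exact ⟨sub_nonpos.mp (nonpos_of_max_zero_sq_nonpos (by linarith)),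
    neg_nonpos.mp (nonpos_of_max_zero_sq_nonpos (by linarith))⟩

theorem mmp_le (hs : IsSubsystemSolution μb μs κb βb T c φ y) {M : ℝ}
    (hμb : 0 ≤ μb) (hκb : 0 ≤ κb) (hβb : 0 < βb) (hM : κb ≤ βb * M)
    (hφ : ∀ t ∈ Icc 0 T, φ t ∈ Icc (0 : ℝ) 1) (hy : ∀ t ∈ Icc 0 T, 0 ≤ y t) (hy0 : y 0 ≤ M) :
    ∀ t ∈ Icc 0 T, y t ≤ M := by
  refine le_of_hasDerivWithinAt_nonpos_of_lt hs.hasDerivWithinAt_mmp hy0 fun t ht hMy => ?_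
  have ht' : t ∈ Icc 0 T := Ico_subset_Icc_self ht
  obtain ⟨hφ0, hφ1⟩ := hφ t ht'
  have hhill : κb * hill (φ t) * (1 - φ t) ≤ κb := by
    have h0 := hill_nonneg hφ0
    have h1 := hill_le_one hφ0
    nlinarith [mul_nonneg hκb h0]
  unfold mmpRate
  nlinarith [mul_nonneg (mul_nonneg hμb hφ0) (hy t ht')]

theorem ecm_mem_Icc_and_mmp_mem_Icc (hs : IsSubsystemSolution μb μs κb βb T c φ y) {M : ℝ}
    (hμb : 0 ≤ μb) (hμs : 0 ≤ μs) (hκb : 0 ≤ κb) (hβb : 0 < βb) (hM : κb ≤ βb * M)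
    (hc : ContinuousOn c (Icc 0 T)) (hc0 : ∀ t ∈ Icc 0 T, 0 ≤ c t)
    (hφ0 : φ 0 ∈ Icc (0 : ℝ) 1) (hy0 : y 0 ∈ Icc 0 M) :
    ∀ t ∈ Icc 0 T, φ t ∈ Icc (0 : ℝ) 1 ∧ y t ∈ Icc 0 M := by
  have hφ := hs.ecm_nonneg hc hφ0.1
  have h := hs.ecm_le_one_and_mmp_nonneg hμb hμs hκb hβb.le hc0 hφ hφ0.2 hy0.1
  have hy := hs.mmp_le hμb hκb hβb hM (fun t ht => ⟨hφ t ht, (h t ht).1⟩) (fun t ht => (h t ht).2)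
    hy0.2
  exact fun t ht => ⟨⟨hφ t ht, (h t ht).1⟩, ⟨(h t ht).2, hy t ht⟩⟩

theorem norm_sub_le {c₁ c₂ φ₁ φ₂ y₁ y₂ : ℝ → ℝ}
    (hs₁ : IsSubsystemSolution μb μs κb βb T c₁ φ₁ y₁)
    (hs₂ : IsSubsystemSolution μb μs κb βb T c₂ φ₂ y₂) {M Mc : ℝ}
    (hμb : 0 ≤ μb) (hμs : 0 ≤ μs) (hκb : 0 ≤ κb) (hβb : 0 ≤ βb) (hM : 0 ≤ M) (hMc : 0 ≤ Mc)
    (hc₁ : ContinuousOn c₁ (Icc 0 T)) (hc₂ : ContinuousOn c₂ (Icc 0 T))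
    (hφ₁ : ∀ t ∈ Icc 0 T, φ₁ t ∈ Icc (0 : ℝ) 1) (hφ₂ : ∀ t ∈ Icc 0 T, φ₂ t ∈ Icc (0 : ℝ) 1)
    (hy₂ : ∀ t ∈ Icc 0 T, y₂ t ∈ Icc 0 M) (hc₂M : ∀ t ∈ Icc 0 T, c₂ t ∈ Icc 0 Mc)
    (hφ0 : φ₁ 0 = φ₂ 0) (hy0 : y₁ 0 = y₂ 0) :
    ∀ t ∈ Icc 0 T, ‖(φ₁ t - φ₂ t, y₁ t - y₂ t)‖
      ≤ exp ((μb * (1 + M) + μs * Mc + 2 * κb + βb) * t) * ∫ s in 0..t, μs * |c₁ s - c₂ s| := by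
  intro t ht
  simpa [hφ0, hy0] using norm_le_exp_mul_add_integral_of_norm_deriv_le
    (g := fun s => μs * |c₁ s - c₂ s|) (by positivity)
    (fun t ht => ((hs₁.hasDerivWithinAt_ecm t ht).sub (hs₂.hasDerivWithinAt_ecm t ht)).prodMk
      ((hs₁.hasDerivWithinAt_mmp t ht).sub (hs₂.hasDerivWithinAt_mmp t ht)))
    (continuousOn_const.mul (hc₁.sub hc₂).abs) (fun t _ => by positivity)
    (fun t ht => have ht' := Ico_subset_Icc_self ht
      norm_rates_sub_le hμb hμs hκb hβb (hφ₁ t ht') (hφ₂ t ht')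
        (abs_le.mpr ⟨by linarith [(hy₂ t ht').1], (hy₂ t ht').2⟩)
        (abs_le.mpr ⟨by linarith [(hc₂M t ht').1], (hc₂M t ht').2⟩)) t ht

end IsSubsystemSolution

theorem ode_subsystem_stability_general
    (μb μs κb βb T Ms Mb0 : ℝ)
    (hμb : 0 ≤ μb) (hμs : 0 ≤ μs) (hκb : 0 < κb) (hβb : 0 < βb)
    (hMs : 0 ≤ Ms) :
    ∃ C : ℝ, 0 ≤ C ∧
      ∀ δ₀ : ℝ, 0 < δ₀ → δ₀ ≤ 1 →
      ∀ c₁ c₂ φ₁ φ₂ y₁ y₂ : ℝ → ℝ,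
        ContinuousOn c₁ (Set.Icc 0 T) → ContinuousOn c₂ (Set.Icc 0 T) →
        (∀ t ∈ Set.Icc (0 : ℝ) T, 0 ≤ c₁ t ∧ c₁ t ≤ Ms) →
        (∀ t ∈ Set.Icc (0 : ℝ) T, 0 ≤ c₂ t ∧ c₂ t ≤ Ms) →
        (∀ t ∈ Set.Icc (0 : ℝ) T,
          HasDerivWithinAt φ₁ (-(μb * φ₁ t * y₁ t) - μs * φ₁ t * c₁ t)
            (Set.Icc 0 T) t) →
        (∀ t ∈ Set.Icc (0 : ℝ) T,
          HasDerivWithinAt φ₂ (-(μb * φ₂ t * y₂ t) - μs * φ₂ t * c₂ t)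
            (Set.Icc 0 T) t) →
        (∀ t ∈ Set.Icc (0 : ℝ) T,
          HasDerivWithinAt y₁
            (κb * (φ₁ t / (1 + φ₁ t)) * (1 - φ₁ t) - (μb * φ₁ t + βb) * y₁ t)
            (Set.Icc 0 T) t) →
        (∀ t ∈ Set.Icc (0 : ℝ) T,
          HasDerivWithinAt y₂
            (κb * (φ₂ t / (1 + φ₂ t)) * (1 - φ₂ t) - (μb * φ₂ t + βb) * y₂ t)
            (Set.Icc 0 T) t) →
        φ₁ 0 = φ₂ 0 → φ₁ 0 ∈ Set.Icc δ₀ 1 →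
        y₁ 0 = y₂ 0 → y₁ 0 ∈ Set.Icc (0 : ℝ) Mb0 →
        ∀ t ∈ Set.Icc (0 : ℝ) T,
          |φ₁ t - φ₂ t| + |y₁ t - y₂ t| ≤ C * ∫ τ in (0 : ℝ)..t, |c₁ τ - c₂ τ| := by
  set M := max Mb0 (κb / βb)
  set K := μb * (1 + M) + μs * Ms + 2 * κb + βb
  have hM : κb ≤ βb * M := by
    rw [← div_le_iff₀' hβb]; exact le_max_right _ _
  have hM0 : 0 ≤ M := (div_nonneg hκb.le hβb.le).trans (le_max_right _ _)
  have hK : 0 ≤ K := by positivity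
  refine ⟨2 * μs * exp (K * T), by positivity, ?_⟩
  intro δ₀ hδ₀ _ c₁ c₂ φ₁ φ₂ y₁ y₂ hc₁ hc₂ hc₁M hc₂M hφ₁ hφ₂ hy₁ hy₂ hφ0 hφ0δ hy0 hy0M t ht
  have hs₁ : IsSubsystemSolution μb μs κb βb T c₁ φ₁ y₁ := ⟨hφ₁, hy₁⟩
  have hs₂ : IsSubsystemSolution μb μs κb βb T c₂ φ₂ y₂ := ⟨hφ₂, hy₂⟩
  have hφ0' : φ₁ 0 ∈ Icc (0 : ℝ) 1 := ⟨hδ₀.le.trans hφ0δ.1, hφ0δ.2⟩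
  have hy0' : y₁ 0 ∈ Icc 0 M := ⟨hy0M.1, hy0M.2.trans (le_max_left _ _)⟩
  have hb₁ := hs₁.ecm_mem_Icc_and_mmp_mem_Icc hμb hμs hκb.le hβb hM hc₁ (fun t ht => (hc₁M t ht).1)
    hφ0' hy0'
  have hb₂ := hs₂.ecm_mem_Icc_and_mmp_mem_Icc hμb hμs hκb.le hβb hM hc₂ (fun t ht => (hc₂M t ht).1)
    (hφ0 ▸ hφ0') (hy0 ▸ hy0')
  have hdiff := hs₁.norm_sub_le hs₂ hμb hμs hκb.le hβb.le hM0 hMs hc₁ hc₂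
    (fun t ht => (hb₁ t ht).1) (fun t ht => (hb₂ t ht).1) (fun t ht => (hb₂ t ht).2) hc₂M
    hφ0 hy0 t ht
  rw [intervalIntegral.integral_const_mul] at hdiff
  have hexp : exp (K * t) ≤ exp (K * T) := exp_le_exp.mpr (mul_le_mul_of_nonneg_left ht.2 hK)
  have hint : 0 ≤ ∫ τ in (0 : ℝ)..t, |c₁ τ - c₂ τ| :=
    intervalIntegral.integral_nonneg ht.1 fun _ _ => abs_nonneg _
  calc |φ₁ t - φ₂ t| + |y₁ t - y₂ t| ≤ 2 * ‖(φ₁ t - φ₂ t, y₁ t - y₂ t)‖ :=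
        abs_add_abs_le_two_mul_norm _ _
    _ ≤ 2 * (exp (K * T) * (μs * ∫ τ in (0 : ℝ)..t, |c₁ τ - c₂ τ|)) := by
        gcongr
        exact hdiff.trans (mul_le_mul_of_nonneg_right hexp (mul_nonneg hμs hint))
    _ = 2 * μs * exp (K * T) * ∫ τ in (0 : ℝ)..t, |c₁ τ - c₂ τ| := by ring

/-- Lipschitz dependence of the ODE subsystem (φ, y) on the driving
soluble-MMP concentration c: there is a constant C ≥ 0 depending only on
μ_b, μ_s, κ_b, β_b, T, M_s and M_{b,0} such that for any two driving functions
c₁, c₂ with values in [0, M_s] and corresponding solutions (φᵢ, yᵢ) with common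
initial data φ₁(0) = φ₂(0) ∈ [δ₀,1], y₁(0) = y₂(0) ∈ [0, M_{b,0}], one has
|φ₁(t) − φ₂(t)| + |y₁(t) − y₂(t)| ≤ C ∫₀ᵗ |c₁ − c₂| for all t ∈ [0,T]. -/
theorem ode_subsystem_stability
    (μb μs κb βb T Ms Mb0 : ℝ)
    (hμb : 0 ≤ μb) (hμs : 0 ≤ μs) (hκb : 0 < κb) (hβb : 0 < βb)
    (hT : 0 < T) (hMs : 0 ≤ Ms) (hMb0 : 0 ≤ Mb0) :
    ∃ C : ℝ, 0 ≤ C ∧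
      ∀ δ₀ : ℝ, 0 < δ₀ → δ₀ ≤ 1 →
      ∀ c₁ c₂ φ₁ φ₂ y₁ y₂ : ℝ → ℝ,
        ContinuousOn c₁ (Set.Icc 0 T) → ContinuousOn c₂ (Set.Icc 0 T) →
        (∀ t ∈ Set.Icc (0 : ℝ) T, 0 ≤ c₁ t ∧ c₁ t ≤ Ms) →
        (∀ t ∈ Set.Icc (0 : ℝ) T, 0 ≤ c₂ t ∧ c₂ t ≤ Ms) →
        (∀ t ∈ Set.Icc (0 : ℝ) T,
          HasDerivWithinAt φ₁ (-(μb * φ₁ t * y₁ t) - μs * φ₁ t * c₁ t)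
            (Set.Icc 0 T) t) →
        (∀ t ∈ Set.Icc (0 : ℝ) T,
          HasDerivWithinAt φ₂ (-(μb * φ₂ t * y₂ t) - μs * φ₂ t * c₂ t)
            (Set.Icc 0 T) t) →
        (∀ t ∈ Set.Icc (0 : ℝ) T,
          HasDerivWithinAt y₁
            (κb * (φ₁ t / (1 + φ₁ t)) * (1 - φ₁ t) - (μb * φ₁ t + βb) * y₁ t)
            (Set.Icc 0 T) t) →
        (∀ t ∈ Set.Icc (0 : ℝ) T,
          HasDerivWithinAt y₂
            (κb * (φ₂ t / (1 + φ₂ t)) * (1 - φ₂ t) - (μb * φ₂ t + βb) * y₂ t)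
            (Set.Icc 0 T) t) →
        φ₁ 0 = φ₂ 0 → φ₁ 0 ∈ Set.Icc δ₀ 1 →
        y₁ 0 = y₂ 0 → y₁ 0 ∈ Set.Icc (0 : ℝ) Mb0 →
        ∀ t ∈ Set.Icc (0 : ℝ) T,
          |φ₁ t - φ₂ t| + |y₁ t - y₂ t| ≤ C * ∫ τ in (0 : ℝ)..t, |c₁ τ - c₂ τ| :=
  ode_subsystem_stability_general μb μs κb βb T Ms Mb0 hμb hμs hκb hβb hMs
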